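/- If s⟦m_L⟧ = ⟦m_L v_L⟧ and s⟦m_L v_L⟧ = ⟦m_L v_L² + P⟧, with m_L^L, m_L^R > 0, then the jump in pressure satisfies ⟦P⟧ = (m_L^L/m_L^R)·(s − v_L^L)²·⟦m_L⟧. -/
import Mathlib


/-- If s⟦m_L⟧ = ⟦m_L v_L⟧ and s⟦m_L v_L⟧ = ⟦m_L v_L² + P⟧ with
m_L^L, m_L^R > 0, then ⟦P⟧ = (m_L^L/m_L^R)·(s − v_L^L)²·⟦m_L⟧. -/
theorem stmt_12 (mLL mLR vLL vLR PL PR s : ℝ) (hmLL : 0 < mLL) (hmLR : 0 < mLR)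
    (h1 : s * (mLR - mLL) = mLR * vLR - mLL * vLL)
    (h2 : s * (mLR * vLR - mLL * vLL) =
      (mLR * vLR ^ 2 + PR) - (mLL * vLL ^ 2 + PL)) :
    PR - PL = (mLL / mLR) * (s - vLL) ^ 2 * (mLR - mLL) := by
  have hv : vLR = (s * (mLR - mLL) + mLL * vLL) / mLR := by
    field_simp; linarith
  subst hv
  field_simp at h2 ⊢
  nlinarith [h2, sq_nonneg mLR, hmLR.ne']
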